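/- (Lemma 3.2) Let s > 1/2. There exists a constant C_s > 0, depending only on s (in particular independent of n), such that for every q ∈ H^s(𝕋), every integer n ≥ 1, every λ ∈ ℂ with |λ − n²| ≤ n/2, every j ∈ ℤ and every w ∈ 𝒬_n ∩ H^s(𝕋), one has ‖T_n w‖_{s;j} ≤ C_s · n^{-1} · ‖q‖_s · ‖w‖_{s;j}. -/

import Mathlib

/-!
Off the resonant modes `±n` one has `|λ - m²| ≥ |n² - m²| - n/2 ≥ n/2`, so `|T_n w|` is bounded
pointwise by `(2/n) (|q̂| ∗ |ŵ|)`, and the lemma reduces to the tame product estimate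
`‖|a| ∗ |b|‖_{s;j} ≤ K_s ‖a‖_s ‖b‖_{s;j}`. For that, split
`⟨m + j⟩^s ≤ 2^s (⟨k⟩^s + ⟨m - k + j⟩^s)` inside the convolution and bound each of the two
pieces by Young's inequality `ℓ² ∗ ℓ¹ ⊆ ℓ²`, where the `ℓ¹` norm of the unweighted factor is
controlled by Cauchy–Schwarz against `∑ ⟨k⟩^{-2s}`, finite exactly because `s > 1/2`.
The estimates are carried out in `ℝ≥0∞`, where no summability has to be tracked.
-/

/-
Functions on the torus are represented by their sequences of Fourier coefficients
`u : ℤ → ℂ`, with `û(m) = u m`.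
-/

open scoped ENNReal

noncomputable section

/-- Japanese bracket `⟨m⟩ = max {1, |m|}`. -/
def jap (m : ℤ) : ℝ := max 1 |(m : ℝ)|

/-- Squared shifted Sobolev norm `‖u‖_{s;j}²` of a sequence of Fourier coefficients. -/
def shiftNormSq (s : ℝ) (j : ℤ) (u : ℤ → ℂ) : ℝ :=
  ∑' m : ℤ, jap (m + j) ^ (2 * s) * ‖u m‖ ^ 2

/-- Shifted Sobolev norm `‖u‖_{s;j}`. -/
def shiftNorm (s : ℝ) (j : ℤ) (u : ℤ → ℂ) : ℝ := Real.sqrt (shiftNormSq s j u)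

/-- Sobolev norm `‖u‖_s`. -/
def sobNorm (s : ℝ) (u : ℤ → ℂ) : ℝ := shiftNorm s 0 u

/-- Membership in `H^s(𝕋)`. -/
def memHs (s : ℝ) (u : ℤ → ℂ) : Prop :=
  Summable fun m : ℤ => jap m ^ (2 * s) * ‖u m‖ ^ 2

/-- Fourier coefficients of the product `q·w` (convolution). -/
def fconv (q w : ℤ → ℂ) (m : ℤ) : ℂ := ∑' k : ℤ, q k * w (m - k)

/-- The operator `T_n = T_n(q,λ)`. -/
def TnOp (q : ℤ → ℂ) (lam : ℂ) (n : ℕ) (w : ℤ → ℂ) : ℤ → ℂ := fun m =>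
  if |m| = (n : ℤ) then 0 else (lam - (m : ℂ) ^ 2)⁻¹ * fconv q w m

/-- Membership in `𝒬_n`. -/
def memQ (n : ℕ) (w : ℤ → ℂ) : Prop := w (n : ℤ) = 0 ∧ w (-(n : ℤ)) = 0

lemma one_le_jap (m : ℤ) : 1 ≤ jap m := le_max_left _ _

lemma jap_pos (m : ℤ) : 0 < jap m := one_pos.trans_le (one_le_jap m)

lemma jap_eq_abs {m : ℤ} (hm : m ≠ 0) : jap m = |(m : ℝ)| :=
  max_eq_right (by exact_mod_cast Int.one_le_abs hm)

lemma jap_add_le (k l : ℤ) : jap (k + l) ≤ jap k + jap l := by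
  refine max_le ((one_le_jap k).trans (le_add_of_nonneg_right (jap_pos l).le)) ?_
  push_cast
  exact (abs_add_le _ _).trans (add_le_add (le_max_right _ _) (le_max_right _ _))

lemma jap_add_le_mul (m j : ℤ) : jap (m + j) ≤ 2 * jap j * jap m := by
  have := jap_add_le m j
  nlinarith [one_le_jap m, one_le_jap j]

lemma summable_inv_jap_rpow {p : ℝ} (hp : 1 < p) : Summable fun k : ℤ => (jap k ^ p)⁻¹ := by
  refine (Real.summable_abs_int_rpow hp).of_norm_bounded_eventually ?_
  filter_upwards [Filter.eventually_cofinite_ne 0] with k hk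
  rw [jap_eq_abs hk, Real.rpow_neg (abs_nonneg _), Real.norm_of_nonneg (by positivity)]

lemma add_rpow_le_two_rpow_mul {a b s : ℝ} (ha : 0 ≤ a) (hb : 0 ≤ b) (hs : 0 ≤ s) :
    (a + b) ^ s ≤ 2 ^ s * (a ^ s + b ^ s) := by
  wlog hab : a ≤ b generalizing a b
  · simpa only [add_comm] using this hb ha (le_of_not_ge hab)
  calc (a + b) ^ s ≤ (2 * b) ^ s := Real.rpow_le_rpow (by positivity) (by linarith) hs
    _ = 2 ^ s * b ^ s := Real.mul_rpow zero_le_two hb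
    _ ≤ 2 ^ s * (a ^ s + b ^ s) := by gcongr; exact le_add_of_nonneg_left (by positivity)

def sobWeight (s : ℝ) (m : ℤ) : ℝ≥0∞ := ENNReal.ofReal (jap m ^ s)

lemma sobWeight_ne_zero (s : ℝ) (m : ℤ) : sobWeight s m ≠ 0 := by
  simpa [sobWeight] using Real.rpow_pos_of_pos (jap_pos m) s

lemma sobWeight_ne_top (s : ℝ) (m : ℤ) : sobWeight s m ≠ ∞ := ENNReal.ofReal_ne_top

lemma sobWeight_add_le {s : ℝ} (hs : 0 ≤ s) (k l : ℤ) :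
    sobWeight s (k + l) ≤ ENNReal.ofReal (2 ^ s) * (sobWeight s k + sobWeight s l) := by
  have hk := jap_pos k
  have hl := jap_pos l
  rw [sobWeight, sobWeight, sobWeight, ← ENNReal.ofReal_add (by positivity) (by positivity),
    ← ENNReal.ofReal_mul (by positivity)]
  gcongr
  exact (Real.rpow_le_rpow (jap_pos _).le (jap_add_le k l) hs).trans
    (add_rpow_le_two_rpow_mul hk.le hl.le hs)

lemma sobWeight_add_le_mul {s : ℝ} (hs : 0 ≤ s) (m j : ℤ) :
    sobWeight s (m + j) ≤ ENNReal.ofReal ((2 * jap j) ^ s) * sobWeight s m := by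
  rw [sobWeight, sobWeight, ← ENNReal.ofReal_mul (by positivity [jap_pos j]),
    ← Real.mul_rpow (by positivity [jap_pos j]) (jap_pos m).le]
  exact ENNReal.ofReal_le_ofReal (Real.rpow_le_rpow (jap_pos _).le (jap_add_le_mul m j) hs)

lemma sobWeight_mul_enorm_sq (s : ℝ) (m : ℤ) (z : ℂ) :
    (sobWeight s m * ‖z‖ₑ) ^ 2 = ENNReal.ofReal (jap m ^ (2 * s) * ‖z‖ ^ 2) := by
  rw [sobWeight, ← ofReal_norm, ← ENNReal.ofReal_mul (by positivity [jap_pos m]),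
    ← ENNReal.ofReal_pow (by positivity [jap_pos m]), mul_pow, ← Real.rpow_natCast,
    ← Real.rpow_mul (jap_pos m).le, mul_comm s]
  norm_num

lemma inv_sobWeight_sq (s : ℝ) (m : ℤ) :
    (sobWeight s m)⁻¹ ^ 2 = ENNReal.ofReal (jap m ^ (2 * s))⁻¹ := by
  have h := jap_pos m
  rw [sobWeight, ← ENNReal.ofReal_inv_of_pos (by positivity), ← ENNReal.ofReal_pow (by positivity),
    inv_pow, ← Real.rpow_natCast, ← Real.rpow_mul h.le, mul_comm s]
  norm_num

namespace ENNReal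

variable {ι G : Type*}

lemma rpow_half_sq (x : ℝ≥0∞) : (x ^ (1 / 2 : ℝ)) ^ 2 = x := by
  rw [← ENNReal.rpow_two, ← ENNReal.rpow_mul]; norm_num

lemma add_sq_le (a b : ℝ≥0∞) : (a + b) ^ 2 ≤ 2 * (a ^ 2 + b ^ 2) := by
  have h := ENNReal.rpow_add_le_mul_rpow_add_rpow a b one_le_two
  norm_num [ENNReal.rpow_two] at h
  exact h

open MeasureTheory in
theorem tsum_mul_sq_le (f g : ι → ℝ≥0∞) :
    (∑' i, f i * g i) ^ 2 ≤ (∑' i, f i ^ 2) * ∑' i, g i ^ 2 := by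
  let _ : MeasurableSpace ι := ⊤
  have h := ENNReal.lintegral_mul_le_Lp_mul_Lq Measure.count Real.HolderConjugate.two_two
    measurable_from_top.aemeasurable measurable_from_top.aemeasurable (f := f) (g := g)
  simp only [lintegral_count, Pi.mul_apply, ENNReal.rpow_two] at h
  calc (∑' i, f i * g i) ^ 2
      ≤ ((∑' i, f i ^ 2) ^ (1 / 2 : ℝ) * (∑' i, g i ^ 2) ^ (1 / 2 : ℝ)) ^ 2 := by gcongr
    _ = (∑' i, f i ^ 2) * ∑' i, g i ^ 2 := by rw [mul_pow, rpow_half_sq, rpow_half_sq]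

theorem tsum_mul_sq_le_tsum_mul_tsum (f g : ι → ℝ≥0∞) :
    (∑' i, f i * g i) ^ 2 ≤ (∑' i, g i) * ∑' i, f i ^ 2 * g i := by
  have hfg : ∀ i, f i * g i = g i ^ (1 / 2 : ℝ) * (f i * g i ^ (1 / 2 : ℝ)) := fun i => by
    rw [mul_left_comm, ← sq, rpow_half_sq]
  simpa only [← hfg, rpow_half_sq, mul_pow] using
    tsum_mul_sq_le (fun i => g i ^ (1 / 2 : ℝ)) (fun i => f i * g i ^ (1 / 2 : ℝ))

theorem tsum_sq_le_of_weight (c b : ι → ℝ≥0∞) (hc₀ : ∀ i, c i ≠ 0) (hc : ∀ i, c i ≠ ∞) :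
    (∑' i, b i) ^ 2 ≤ (∑' i, (c i)⁻¹ ^ 2) * ∑' i, (c i * b i) ^ 2 := by
  simpa only [ENNReal.inv_mul_cancel_left (hc₀ _) (hc _)] using
    tsum_mul_sq_le (fun i => (c i)⁻¹) (fun i => c i * b i)

theorem tsum_sq_tsum_mul_sub_le [AddGroup G] (f g : G → ℝ≥0∞) :
    ∑' m, (∑' k, f k * g (m - k)) ^ 2 ≤ (∑' k, f k ^ 2) * (∑' k, g k) ^ 2 := by
  have hshift : ∀ m, ∑' k, g (m - k) = ∑' k, g k := fun m => (Equiv.subLeft m).tsum_eq g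
  have hshift' : ∀ k, ∑' m, g (m - k) = ∑' m, g m := fun k => (Equiv.subRight k).tsum_eq g
  calc ∑' m, (∑' k, f k * g (m - k)) ^ 2
      ≤ ∑' m, (∑' k, g k) * ∑' k, f k ^ 2 * g (m - k) := ENNReal.tsum_le_tsum fun m => by
        simpa only [hshift] using tsum_mul_sq_le_tsum_mul_tsum f (fun k => g (m - k))
    _ = (∑' k, g k) * ∑' k, f k ^ 2 * ∑' m, g (m - k) := by
        rw [ENNReal.tsum_mul_left, ENNReal.tsum_comm]
        simp only [ENNReal.tsum_mul_left]
    _ = (∑' k, f k ^ 2) * (∑' k, g k) ^ 2 := by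
        simp only [hshift', ENNReal.tsum_mul_right]
        ring

theorem tsum_mul_sub_comm [AddCommGroup G] (f g : G → ℝ≥0∞) (m : G) :
    ∑' k, f k * g (m - k) = ∑' k, g k * f (m - k) := by
  rw [← (Equiv.subLeft m).tsum_eq]
  simp [mul_comm]

end ENNReal

lemma sobWeight_mul_conv_le {s : ℝ} (hs : 0 ≤ s) (j m : ℤ) (a b : ℤ → ℝ≥0∞) :
    sobWeight s (m + j) * ∑' k, a k * b (m - k) ≤
      ENNReal.ofReal (2 ^ s) * (∑' k, sobWeight s k * a k * b (m - k) +
        ∑' k, a k * (sobWeight s (m - k + j) * b (m - k))) := by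
  rw [← ENNReal.tsum_add, ← ENNReal.tsum_mul_left, ← ENNReal.tsum_mul_left]
  refine ENNReal.tsum_le_tsum fun k => ?_
  calc sobWeight s (m + j) * (a k * b (m - k))
      = sobWeight s (k + (m - k + j)) * (a k * b (m - k)) := by ring_nf
    _ ≤ ENNReal.ofReal (2 ^ s) * (sobWeight s k + sobWeight s (m - k + j)) * (a k * b (m - k)) := by
        gcongr; exact sobWeight_add_le hs _ _
    _ = _ := by ring

theorem tsum_sobWeight_mul_conv_sq_le {s : ℝ} (hs : 0 ≤ s) (j : ℤ) (a b : ℤ → ℝ≥0∞) :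
    ∑' m, (sobWeight s (m + j) * ∑' k, a k * b (m - k)) ^ 2 ≤
      4 * ENNReal.ofReal (2 ^ s) ^ 2 * (∑' k, (sobWeight s k)⁻¹ ^ 2) *
        (∑' k, (sobWeight s k * a k) ^ 2) * ∑' l, (sobWeight s (l + j) * b l) ^ 2 := by
  set A : ℤ → ℝ≥0∞ := fun k => sobWeight s k * a k
  set B : ℤ → ℝ≥0∞ := fun l => sobWeight s (l + j) * b l
  set τ := ∑' k, (sobWeight s k)⁻¹ ^ 2
  have ha : (∑' k, a k) ^ 2 ≤ τ * ∑' k, A k ^ 2 :=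
    ENNReal.tsum_sq_le_of_weight _ a (sobWeight_ne_zero s) (sobWeight_ne_top s)
  have hb : (∑' l, b l) ^ 2 ≤ τ * ∑' l, B l ^ 2 := by
    have hτ : ∑' l, (sobWeight s (l + j))⁻¹ ^ 2 = τ :=
      (Equiv.addRight j).tsum_eq fun k => (sobWeight s k)⁻¹ ^ 2
    simpa only [hτ] using ENNReal.tsum_sq_le_of_weight (fun l => sobWeight s (l + j)) b
      (fun _ => sobWeight_ne_zero _ _) (fun _ => sobWeight_ne_top _ _)
  have h₁ : ∑' m, (∑' k, A k * b (m - k)) ^ 2 ≤ τ * (∑' k, A k ^ 2) * ∑' l, B l ^ 2 :=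
    calc _ ≤ (∑' k, A k ^ 2) * (∑' l, b l) ^ 2 := ENNReal.tsum_sq_tsum_mul_sub_le A b
      _ ≤ (∑' k, A k ^ 2) * (τ * ∑' l, B l ^ 2) := by gcongr
      _ = _ := by ring
  have h₂ : ∑' m, (∑' k, a k * B (m - k)) ^ 2 ≤ τ * (∑' k, A k ^ 2) * ∑' l, B l ^ 2 := by
    simp only [ENNReal.tsum_mul_sub_comm a B]
    calc _ ≤ (∑' l, B l ^ 2) * (∑' k, a k) ^ 2 := ENNReal.tsum_sq_tsum_mul_sub_le B a
      _ ≤ (∑' l, B l ^ 2) * (τ * ∑' k, A k ^ 2) := by gcongr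
      _ = _ := by ring
  calc ∑' m, (sobWeight s (m + j) * ∑' k, a k * b (m - k)) ^ 2
      ≤ ∑' m, (ENNReal.ofReal (2 ^ s) *
          (∑' k, A k * b (m - k) + ∑' k, a k * B (m - k))) ^ 2 :=
        ENNReal.tsum_le_tsum fun m => pow_le_pow_left' (sobWeight_mul_conv_le hs j m a b) 2
    _ ≤ ∑' m, ENNReal.ofReal (2 ^ s) ^ 2 *
          (2 * ((∑' k, A k * b (m - k)) ^ 2 + (∑' k, a k * B (m - k)) ^ 2)) :=
        ENNReal.tsum_le_tsum fun m => by rw [mul_pow]; gcongr; exact ENNReal.add_sq_le _ _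
    _ = 2 * ENNReal.ofReal (2 ^ s) ^ 2 *
          (∑' m, (∑' k, A k * b (m - k)) ^ 2 + ∑' m, (∑' k, a k * B (m - k)) ^ 2) := by
        rw [← ENNReal.tsum_add, ← ENNReal.tsum_mul_left]
        exact tsum_congr fun m => by ring
    _ ≤ 2 * ENNReal.ofReal (2 ^ s) ^ 2 *
          (τ * (∑' k, A k ^ 2) * ∑' l, B l ^ 2 + τ * (∑' k, A k ^ 2) * ∑' l, B l ^ 2) := by
        gcongr
    _ = _ := by ring

theorem exists_tsum_sobWeight_mul_conv_sq_le {s : ℝ} (hs : 1 / 2 < s) :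
    ∃ K : ℝ, 0 < K ∧ ∀ (j : ℤ) (a b : ℤ → ℝ≥0∞),
      ∑' m, (sobWeight s (m + j) * ∑' k, a k * b (m - k)) ^ 2 ≤
        ENNReal.ofReal (K ^ 2) * (∑' k, (sobWeight s k * a k) ^ 2) *
          ∑' l, (sobWeight s (l + j) * b l) ^ 2 := by
  have hsum := summable_inv_jap_rpow (p := 2 * s) (by linarith)
  have hnonneg : ∀ k : ℤ, 0 ≤ (jap k ^ (2 * s))⁻¹ :=
    fun k => inv_nonneg.2 (Real.rpow_nonneg (jap_pos k).le _)
  set τ := ∑' k : ℤ, (jap k ^ (2 * s))⁻¹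
  have hτ : 1 ≤ τ :=
    calc (1 : ℝ) = (jap 0 ^ (2 * s))⁻¹ := by simp [jap]
      _ ≤ τ := hsum.le_tsum 0 fun k _ => hnonneg k
  refine ⟨2 * 2 ^ s * √τ, by positivity, fun j a b => ?_⟩
  have hτe : ∑' k, (sobWeight s k)⁻¹ ^ 2 = ENNReal.ofReal τ := by
    simp only [inv_sobWeight_sq]
    exact (ENNReal.ofReal_tsum_of_nonneg hnonneg hsum).symm
  have hK : 4 * ENNReal.ofReal (2 ^ s) ^ 2 * ENNReal.ofReal τ =
      ENNReal.ofReal ((2 * 2 ^ s * √τ) ^ 2) := by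
    rw [show (2 * 2 ^ s * √τ) ^ 2 = 4 * (2 ^ s) ^ 2 * τ by
        rw [mul_pow, mul_pow, Real.sq_sqrt (by linarith)]; ring,
      ENNReal.ofReal_mul (by positivity), ENNReal.ofReal_mul (by norm_num),
      ENNReal.ofReal_pow (by positivity)]
    norm_num
  simpa only [hτe, hK] using tsum_sobWeight_mul_conv_sq_le (s := s) (by linarith) j a b

/-- Unlike `shiftNormSq`, this is `∞`, not `0`, outside the weighted `ℓ²` space. -/
def ennShiftNormSq (s : ℝ) (j : ℤ) (u : ℤ → ℂ) : ℝ≥0∞ :=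
  ∑' m, (sobWeight s (m + j) * ‖u m‖ₑ) ^ 2

lemma shiftNormSq_eq_toReal (s : ℝ) (j : ℤ) (u : ℤ → ℂ) :
    shiftNormSq s j u = (ennShiftNormSq s j u).toReal := by
  rw [ennShiftNormSq, ENNReal.tsum_toReal_eq fun m => by simp [sobWeight_mul_enorm_sq]]
  refine tsum_congr fun m => ?_
  rw [sobWeight_mul_enorm_sq, ENNReal.toReal_ofReal
    (mul_nonneg (Real.rpow_nonneg (jap_pos _).le _) (sq_nonneg _))]

lemma memHs.ennShiftNormSq_ne_top {s : ℝ} {u : ℤ → ℂ} (hu : memHs s u) :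
    ennShiftNormSq s 0 u ≠ ∞ := by
  simp only [ennShiftNormSq, add_zero, sobWeight_mul_enorm_sq]
  rw [← ENNReal.ofReal_tsum_of_nonneg
    (fun m => mul_nonneg (Real.rpow_nonneg (jap_pos _).le _) (sq_nonneg _)) hu]
  exact ENNReal.ofReal_ne_top

lemma ennShiftNormSq_le {s : ℝ} (hs : 0 ≤ s) (j : ℤ) (u : ℤ → ℂ) :
    ennShiftNormSq s j u ≤ ENNReal.ofReal ((2 * jap j) ^ s) ^ 2 * ennShiftNormSq s 0 u := by
  rw [ennShiftNormSq, ennShiftNormSq, ← ENNReal.tsum_mul_left]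
  refine ENNReal.tsum_le_tsum fun m => ?_
  rw [add_zero, ← mul_pow, ← mul_assoc]
  gcongr
  exact sobWeight_add_le_mul hs m j

lemma shiftNorm_le_of_ennShiftNormSq_le {s c : ℝ} {j₁ j₂ j₃ : ℤ} {u v w : ℤ → ℂ} (hc : 0 ≤ c)
    (hv : ennShiftNormSq s j₂ v ≠ ∞) (hw : ennShiftNormSq s j₃ w ≠ ∞)
    (h : ennShiftNormSq s j₁ u ≤
      ENNReal.ofReal (c ^ 2) * ennShiftNormSq s j₂ v * ennShiftNormSq s j₃ w) :
    shiftNorm s j₁ u ≤ c * shiftNorm s j₂ v * shiftNorm s j₃ w := by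
  have h' := ENNReal.toReal_mono (by finiteness) h
  rw [ENNReal.toReal_mul, ENNReal.toReal_mul, ENNReal.toReal_ofReal (sq_nonneg c),
    ← shiftNormSq_eq_toReal, ← shiftNormSq_eq_toReal, ← shiftNormSq_eq_toReal] at h'
  have hv₀ : 0 ≤ shiftNormSq s j₂ v := shiftNormSq_eq_toReal s j₂ v ▸ ENNReal.toReal_nonneg
  calc √(shiftNormSq s j₁ u) ≤ √(c ^ 2 * shiftNormSq s j₂ v * shiftNormSq s j₃ w) :=
        Real.sqrt_le_sqrt h'
    _ = c * shiftNorm s j₂ v * shiftNorm s j₃ w := by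
        rw [Real.sqrt_mul (mul_nonneg (sq_nonneg c) hv₀), Real.sqrt_mul (sq_nonneg c),
          Real.sqrt_sq hc, shiftNorm, shiftNorm]

lemma half_le_norm_sub_sq {n : ℕ} {lam : ℂ} (hlam : ‖lam - (n : ℂ) ^ 2‖ ≤ (n : ℝ) / 2) {m : ℤ}
    (hm : |m| ≠ (n : ℤ)) : (n : ℝ) / 2 ≤ ‖lam - (m : ℂ) ^ 2‖ := by
  have hint : (n : ℤ) ≤ |(n : ℤ) ^ 2 - m ^ 2| := by
    have h₁ : 1 ≤ |(n : ℤ) - (|m|)| := Int.one_le_abs (sub_ne_zero.2 (Ne.symm hm))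
    rw [← sq_abs m, sq_sub_sq, abs_mul, abs_of_nonneg (by positivity : (0 : ℤ) ≤ n + |m|)]
    nlinarith [abs_nonneg m]
  have hcast : (n : ℝ) ≤ ‖(n : ℂ) ^ 2 - (m : ℂ) ^ 2‖ := by
    have : (n : ℂ) ^ 2 - (m : ℂ) ^ 2 = (((n : ℤ) ^ 2 - m ^ 2 : ℤ) : ℂ) := by push_cast; ring
    rw [this, Complex.norm_intCast]
    exact_mod_cast hint
  have := norm_sub_le_norm_sub_add_norm_sub ((n : ℂ) ^ 2) lam ((m : ℂ) ^ 2)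
  rw [norm_sub_rev ((n : ℂ) ^ 2) lam] at this
  linarith

lemma enorm_TnOp_le {q w : ℤ → ℂ} {n : ℕ} (hn : 1 ≤ n) {lam : ℂ}
    (hlam : ‖lam - (n : ℂ) ^ 2‖ ≤ (n : ℝ) / 2) (m : ℤ) :
    ‖TnOp q lam n w m‖ₑ ≤ ENNReal.ofReal (2 / n) * ∑' k, ‖q k‖ₑ * ‖w (m - k)‖ₑ := by
  by_cases hm : |m| = (n : ℤ)
  · simp [TnOp, hm]
  have hn' : (0 : ℝ) < n / 2 := by positivity
  have hinv : ‖(lam - (m : ℂ) ^ 2)⁻¹‖ₑ ≤ ENNReal.ofReal (2 / n) := by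
    rw [← ofReal_norm, norm_inv, ← inv_div]
    exact ENNReal.ofReal_le_ofReal (inv_anti₀ hn' (half_le_norm_sub_sq hlam hm))
  rw [TnOp, if_neg hm, enorm_mul, fconv]
  gcongr
  exact enorm_tsum_le_tsum_enorm.trans_eq (by simp only [enorm_mul])

lemma ennShiftNormSq_TnOp_le {s : ℝ} {q w : ℤ → ℂ} {n : ℕ} (hn : 1 ≤ n) {lam : ℂ}
    (hlam : ‖lam - (n : ℂ) ^ 2‖ ≤ (n : ℝ) / 2) (j : ℤ) :
    ennShiftNormSq s j (TnOp q lam n w) ≤ ENNReal.ofReal (2 / n) ^ 2 *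
      ∑' m, (sobWeight s (m + j) * ∑' k, ‖q k‖ₑ * ‖w (m - k)‖ₑ) ^ 2 := by
  rw [ennShiftNormSq, ← ENNReal.tsum_mul_left]
  refine ENNReal.tsum_le_tsum fun m => ?_
  rw [← mul_pow, mul_left_comm]
  gcongr
  exact enorm_TnOp_le hn hlam m

/-- **Lemma 3.2.** -/
theorem lemma_3_2 (s : ℝ) (hs : 1 / 2 < s) :
    ∃ C : ℝ, 0 < C ∧
      ∀ (q : ℤ → ℂ) (n : ℕ) (lam : ℂ) (j : ℤ) (w : ℤ → ℂ),
        1 ≤ n → memHs s q →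
        ‖lam - (n : ℂ) ^ 2‖ ≤ (n : ℝ) / 2 →
        memQ n w → memHs s w →
        shiftNorm s j (TnOp q lam n w) ≤ C * (n : ℝ)⁻¹ * sobNorm s q * shiftNorm s j w := by
  obtain ⟨K, hK, hconv⟩ := exists_tsum_sobWeight_mul_conv_sq_le hs
  refine ⟨2 * K, by positivity, fun q n lam j w hn hq hlam _ hw => ?_⟩
  have hw' : ennShiftNormSq s j w ≠ ∞ :=
    ne_top_of_le_ne_top (by finiteness [hw.ennShiftNormSq_ne_top])
      (ennShiftNormSq_le (by linarith) j w)
  refine shiftNorm_le_of_ennShiftNormSq_le (by positivity) hq.ennShiftNormSq_ne_top hw' ?_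
  calc ennShiftNormSq s j (TnOp q lam n w)
      ≤ ENNReal.ofReal (2 / n) ^ 2 *
          ∑' m, (sobWeight s (m + j) * ∑' k, ‖q k‖ₑ * ‖w (m - k)‖ₑ) ^ 2 :=
        ennShiftNormSq_TnOp_le hn hlam j
    _ ≤ ENNReal.ofReal (2 / n) ^ 2 *
          (ENNReal.ofReal (K ^ 2) * ennShiftNormSq s 0 q * ennShiftNormSq s j w) := by
        gcongr
        simpa only [ennShiftNormSq, add_zero] using hconv j _ _
    _ = ENNReal.ofReal ((2 * K * (n : ℝ)⁻¹) ^ 2) * ennShiftNormSq s 0 q *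
          ennShiftNormSq s j w := by
        rw [← ENNReal.ofReal_pow (by positivity), ← mul_assoc, ← mul_assoc,
          ← ENNReal.ofReal_mul (by positivity)]
        ring_nf
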